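/- Let H be a real Hilbert space, J : H → ℝ a C¹ functional, and N = {w ∈ H : ⟨J'(w), w⟩ = 0, w ≠ 0} the Nehari manifold. Define ψ(w) = ⟨J'(w), w⟩ and suppose w₀ ∈ N is a local minimizer (or maximizer) of J on N with ⟨ψ'(w₀), w₀⟩ ≠ 0 (i.e., w₀ ∉ N⁰). Then J'(w₀) = 0. -/

import Mathlib

open Filter Asymptotics Set

private lemma aux_pos (x ta Q : ℝ) (h1 : -(Q / 4) ≤ x - (ta + Q))
    (h2 : -(Q / 2) ≤ ta) (hQ : 0 < Q) : 0 < x := by linarith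

private lemma aux_neg (x ta Q : ℝ) (h1 : x - (ta + -Q) ≤ Q / 4)
    (h2 : ta ≤ Q / 2) (hQ : 0 < Q) : x < 0 := by linarith

set_option maxHeartbeats 1000000 in
theorem stmt_19 {H : Type*} [NormedAddCommGroup H] [InnerProductSpace ℝ H]
    (J : H → ℝ) (hJ : ContDiff ℝ 1 J)
    (w₀ : H) (hw₀ : w₀ ≠ 0) (hN : fderiv ℝ J w₀ w₀ = 0)
    (hext : IsLocalMinOn J {w : H | w ≠ 0 ∧ fderiv ℝ J w w = 0} w₀ ∨
            IsLocalMaxOn J {w : H | w ≠ 0 ∧ fderiv ℝ J w w = 0} w₀)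
    (ψ' : H →L[ℝ] ℝ) (hψ : HasFDerivAt (fun w : H => fderiv ℝ J w w) ψ' w₀)
    (hnd : ψ' w₀ ≠ 0) :
    fderiv ℝ J w₀ = 0 := by
  have hJd : Differentiable ℝ J := hJ.differentiable one_ne_zero
  have hψc : Continuous fun w : H => fderiv ℝ J w w :=
    (hJ.continuous_fderiv one_ne_zero).clm_apply continuous_id
  ext v
  simp only [ContinuousLinearMap.zero_apply]
  by_contra hb
  set b := fderiv ℝ J w₀ v with hbdef
  -- unify min/max cases via a sign σ
  obtain ⟨σ, hσ2, hσabs, hσ⟩ : ∃ σ : ℝ, σ ^ 2 = 1 ∧ |σ| = 1 ∧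
      ∀ᶠ w in nhdsWithin w₀ {w : H | w ≠ 0 ∧ fderiv ℝ J w w = 0},
        0 ≤ σ * (J w - J w₀) := by
    rcases hext with h | h
    · refine ⟨1, one_pow 2, abs_one, ?_⟩
      refine (h : ∀ᶠ w in _, J w₀ ≤ J w).mono fun w hw => ?_
      rw [one_mul]
      exact sub_nonneg.2 hw
    · refine ⟨-1, by norm_num, by norm_num, ?_⟩
      refine (h : ∀ᶠ w in _, J w ≤ J w₀).mono fun w hw => ?_
      rw [neg_one_mul]
      exact neg_nonneg.2 (sub_nonpos.2 hw)
  obtain ⟨ε, hε0, hεball⟩ : ∃ ε > 0, Metric.ball w₀ ε ∩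
      {w : H | w ≠ 0 ∧ fderiv ℝ J w w = 0} ⊆ {w : H | 0 ≤ σ * (J w - J w₀)} :=
    Metric.mem_nhdsWithin_iff.1 hσ
  -- constants
  set a : ℝ := ψ' v with hadef
  set c : ℝ := ψ' w₀ with hcdef
  have hc : c ≠ 0 := hnd
  have hcabs : 0 < |c| := abs_pos.2 hc
  set M : ℝ := (2 * |a| + |c|) / |c| with hMdef
  have hMc : M * |c| = 2 * |a| + |c| := div_mul_cancel₀ _ (ne_of_gt hcabs)
  have hM1 : 1 ≤ M := by
    rw [hMdef, le_div_iff₀ hcabs]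
    linarith only [abs_nonneg a]
  have hM0 : 0 < M := lt_of_lt_of_le one_pos hM1
  set C : ℝ := ‖v‖ + M * ‖w₀‖ + 1 with hCdef
  have hC0 : 0 < C := by
    have h1 : (0:ℝ) ≤ ‖v‖ := norm_nonneg _
    have h2 : (0:ℝ) ≤ M * ‖w₀‖ := mul_nonneg hM0.le (norm_nonneg _)
    rw [hCdef]
    linarith only [h1, h2]
  -- derivative of p ↦ ψ(w₀ + p.1 • v + p.2 • w₀) at (0,0)
  set L : ℝ × ℝ →L[ℝ] H :=
    (ContinuousLinearMap.fst ℝ ℝ ℝ).smulRight v +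
      (ContinuousLinearMap.snd ℝ ℝ ℝ).smulRight w₀ with hLdef
  have hLapp : ∀ p : ℝ × ℝ, L p = p.1 • v + p.2 • w₀ := by
    intro p
    simp [hLdef]
  have hγ : HasFDerivAt (fun p : ℝ × ℝ => w₀ + (p.1 • v + p.2 • w₀)) L ((0, 0) : ℝ × ℝ) := by
    have h1 : HasFDerivAt (fun p : ℝ × ℝ => w₀ + L p) L ((0, 0) : ℝ × ℝ) :=
      L.hasFDerivAt.const_add w₀
    have h2 : (fun p : ℝ × ℝ => w₀ + L p) = fun p : ℝ × ℝ => w₀ + (p.1 • v + p.2 • w₀) := by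
      funext p; rw [hLapp]
    rwa [h2] at h1
  have hF : HasFDerivAt
      (fun p : ℝ × ℝ => fderiv ℝ J (w₀ + (p.1 • v + p.2 • w₀)) (w₀ + (p.1 • v + p.2 • w₀)))
      (ψ'.comp L) ((0, 0) : ℝ × ℝ) := by
    have h0 : w₀ + (((0:ℝ), (0:ℝ)).1 • v + ((0:ℝ), (0:ℝ)).2 • w₀) = w₀ := by simp
    exact HasFDerivAt.comp ((0, 0) : ℝ × ℝ) (h0 ▸ hψ) hγ
  have hFo := hasFDerivAt_iff_isLittleO_nhds_zero.1 hF
  have h4 : (0:ℝ) < |c| / 4 := by positivity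
  obtain ⟨δψ, hδψ0, hδψ⟩ := Metric.eventually_nhds_iff.1 (hFo.def h4)
  have hLval : ∀ t s : ℝ, (ψ'.comp L) (t, s) = t * a + s * c := by
    intro t s
    simp [hLapp, hadef, hcdef]
  -- usable quantitative estimate for ψ
  have hest : ∀ t s : ℝ, max |t| |s| < δψ →
      |fderiv ℝ J (w₀ + (t • v + s • w₀)) (w₀ + (t • v + s • w₀)) - (t * a + s * c)|
        ≤ |c| / 4 * max |t| |s| := by
    intro t s hts
    have hdist : dist ((t, s) : ℝ × ℝ) 0 < δψ := by
      rw [dist_zero_right, Prod.norm_def]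
      simpa [Real.norm_eq_abs] using hts
    have := hδψ hdist
    rw [Prod.norm_def] at this
    simpa [hLval, hN, sub_zero, Real.norm_eq_abs] using this
  -- quantitative estimate for J
  have hJo := hasFDerivAt_iff_isLittleO_nhds_zero.1 (hJd w₀).hasFDerivAt
  set κ : ℝ := |b| / (2 * C) with hκdef
  have hκ0 : 0 < κ := by
    have : 0 < |b| := abs_pos.2 hb
    positivity
  obtain ⟨δJ, hδJ0, hδJ⟩ := Metric.eventually_nhds_iff.1 (hJo.def hκ0)
  have hJest : ∀ u : H, ‖u‖ < δJ →
      |J (w₀ + u) - J w₀ - fderiv ℝ J w₀ u| ≤ κ * ‖u‖ := by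
    intro u hu
    have hdist : dist u 0 < δJ := by rwa [dist_zero_right]
    simpa [Real.norm_eq_abs] using hδJ hdist
  -- choose τ
  set τ : ℝ := min (min (δψ / M) (δJ / C)) (min (‖w₀‖ / C) (ε / C)) / 2 with hτdef
  have hA1 : 0 < δψ / M := div_pos hδψ0 hM0
  have hA2 : 0 < δJ / C := div_pos hδJ0 hC0
  have hA3 : 0 < ‖w₀‖ / C := div_pos (norm_pos_iff.2 hw₀) hC0
  have hA4 : 0 < ε / C := div_pos hε0 hC0
  have hτ0 : 0 < τ := by
    rw [hτdef]
    have h1 := lt_min (lt_min hA1 hA2) (lt_min hA3 hA4)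
    linarith only [h1]
  have hτlt1 : τ < δψ / M := by
    rw [hτdef]
    have h2 := min_le_left (δψ / M) (δJ / C)
    have h3 := min_le_left (min (δψ / M) (δJ / C)) (min (‖w₀‖ / C) (ε / C))
    linarith only [h2, h3, hA1]
  have hτlt2 : τ < δJ / C := by
    rw [hτdef]
    have h2 := min_le_right (δψ / M) (δJ / C)
    have h3 := min_le_left (min (δψ / M) (δJ / C)) (min (‖w₀‖ / C) (ε / C))
    linarith only [h2, h3, hA2]
  have hτlt3 : τ < ‖w₀‖ / C := by
    rw [hτdef]
    have h2 := min_le_left (‖w₀‖ / C) (ε / C)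
    have h3 := min_le_right (min (δψ / M) (δJ / C)) (min (‖w₀‖ / C) (ε / C))
    linarith only [h2, h3, hA3]
  have hτlt4 : τ < ε / C := by
    rw [hτdef]
    have h2 := min_le_right (‖w₀‖ / C) (ε / C)
    have h3 := min_le_right (min (δψ / M) (δJ / C)) (min (‖w₀‖ / C) (ε / C))
    linarith only [h2, h3, hA4]
  have hτψ : M * τ < δψ := by
    calc M * τ < M * (δψ / M) := (mul_lt_mul_iff_right₀ hM0).2 hτlt1
    _ = δψ := by field_simp
  have hτJ : C * τ < δJ := by
    calc C * τ < C * (δJ / C) := (mul_lt_mul_iff_right₀ hC0).2 hτlt2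
    _ = δJ := by field_simp
  have hτw : C * τ < ‖w₀‖ := by
    calc C * τ < C * (‖w₀‖ / C) := (mul_lt_mul_iff_right₀ hC0).2 hτlt3
    _ = ‖w₀‖ := by field_simp
  have hτε : C * τ < ε := by
    calc C * τ < C * (ε / C) := (mul_lt_mul_iff_right₀ hC0).2 hτlt4
    _ = ε := by field_simp
  -- choose t
  set t : ℝ := -(σ * (b / |b|)) * τ with htdef
  have hbabs : 0 < |b| := abs_pos.2 hb
  have habs_t : |t| = τ := by
    rw [htdef, abs_mul, abs_neg, abs_mul, hσabs, abs_div, abs_abs,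
      div_self (ne_of_gt hbabs), abs_of_pos hτ0]
    ring
  have hσtb : σ * (t * b) = -(|b| * τ) := by
    have hb2 : b ^ 2 / |b| = |b| := by
      rw [← sq_abs, sq, mul_div_assoc, div_self (ne_of_gt hbabs), mul_one]
    have h1 : σ * (t * b) = -(σ ^ 2) * (b ^ 2 / |b|) * τ := by
      rw [htdef]; ring
    rw [h1, hσ2, hb2]; ring
  set S : ℝ := M * τ with hSdef
  have hS0 : 0 < S := mul_pos hM0 hτ0
  -- the one-variable function for IVT
  set g : ℝ → ℝ := fun s => fderiv ℝ J (w₀ + (t • v + s • w₀)) (w₀ + (t • v + s • w₀))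
    with hgdef
  have hgc : Continuous g := by
    apply hψc.comp
    exact continuous_const.add (continuous_const.add (continuous_id.smul continuous_const))
  have hmax : ∀ s : ℝ, |s| ≤ S → max |t| |s| ≤ S := by
    intro s hs
    apply max_le _ hs
    rw [habs_t]
    calc τ = 1 * τ := (one_mul τ).symm
    _ ≤ M * τ := mul_le_mul_of_nonneg_right hM1 hτ0.le
  set Q : ℝ := τ * (2 * |a| + |c|) with hQdef
  have hQ0 : 0 < Q :=
    mul_pos hτ0 (lt_of_lt_of_le hcabs (le_add_of_nonneg_left (by positivity)))
  have hSc : S * |c| = Q := by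
    rw [hSdef, hQdef]
    calc M * τ * |c| = M * |c| * τ := by ring
    _ = (2 * |a| + |c|) * τ := by rw [hMc]
    _ = τ * (2 * |a| + |c|) := by ring
  have h14 : |c| / 4 * S = Q / 4 := by rw [← hSc]; ring
  have hta : |t * a| = τ * |a| := by rw [abs_mul, habs_t]
  have htaQ : |t * a| ≤ Q / 2 := by
    rw [hta]
    have hexp : Q = 2 * (τ * |a|) + τ * |c| := by rw [hQdef]; ring
    have hτc : (0:ℝ) ≤ τ * |c| := mul_nonneg hτ0.le (abs_nonneg c)
    linarith only [hexp, hτc]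
  have hta1 : -(Q / 2) ≤ t * a := le_trans (by linarith only [htaQ]) (neg_abs_le (t * a))
  have hta2 : t * a ≤ Q / 2 := le_trans (le_abs_self (t * a)) htaQ
  have hgSbound : |g S - (t * a + S * c)| ≤ Q / 4 := by
    have h1 : max |t| |S| < δψ := lt_of_le_of_lt (hmax S (by rw [abs_of_pos hS0])) hτψ
    refine le_trans (hest t S h1) ?_
    rw [← h14]
    exact mul_le_mul_of_nonneg_left (hmax S (by rw [abs_of_pos hS0])) (by positivity)
  have hgSbound' : |g (-S) - (t * a + (-S) * c)| ≤ Q / 4 := by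
    have habs : |(-S : ℝ)| = S := by rw [abs_neg, abs_of_pos hS0]
    have h1 : max |t| |(-S : ℝ)| < δψ := lt_of_le_of_lt (hmax (-S) (le_of_eq habs)) hτψ
    refine le_trans (hest t (-S) h1) ?_
    rw [← h14]
    exact mul_le_mul_of_nonneg_left (hmax (-S) (le_of_eq habs)) (by positivity)
  -- opposite signs at the endpoints
  have hsigns : (0 : ℝ) ∈ uIcc (g (-S)) (g S) := by
    have e1 := (abs_le.1 hgSbound).1
    have e2 := (abs_le.1 hgSbound).2
    have e3 := (abs_le.1 hgSbound').1
    have e4 := (abs_le.1 hgSbound').2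
    rcases hc.lt_or_gt with hneg | hpos
    · -- c < 0 : g S < 0 < g (-S)
      have hcabs' : |c| = -c := abs_of_neg hneg
      have hScval : S * c = -Q := by
        rw [← hSc, hcabs']; ring
      have hScval' : (-S) * c = Q := by rw [neg_mul, hScval, neg_neg]
      rw [hScval] at e2
      rw [hScval'] at e3
      have hgS : g S < 0 := aux_neg _ _ _ e2 hta2 hQ0
      have hgS' : 0 < g (-S) := aux_pos _ _ _ e3 hta1 hQ0
      rw [mem_uIcc]
      right
      exact ⟨hgS.le, hgS'.le⟩
    · -- c > 0 : g (-S) < 0 < g S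
      have hcabs' : |c| = c := abs_of_pos hpos
      have hScval : S * c = Q := by rw [← hSc, hcabs']
      have hScval' : (-S) * c = -Q := by rw [neg_mul, hScval]
      rw [hScval] at e1
      rw [hScval'] at e4
      have hgS : 0 < g S := aux_pos _ _ _ e1 hta1 hQ0
      have hgS' : g (-S) < 0 := aux_neg _ _ _ e4 hta2 hQ0
      rw [mem_uIcc]
      left
      exact ⟨hgS'.le, hgS.le⟩
  obtain ⟨s, hsmem, hgs⟩ := intermediate_value_uIcc (hgc.continuousOn (s := uIcc (-S) S)) hsigns
  have hsabs : |s| ≤ S := by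
    rw [uIcc_of_le (by linarith only [hS0] : -S ≤ S)] at hsmem
    exact abs_le.2 ⟨hsmem.1, hsmem.2⟩
  -- the perturbed point
  set u : H := t • v + s • w₀ with hudef
  set w : H := w₀ + u with hwdef
  have hunorm : ‖u‖ ≤ τ * C := by
    have h1 : ‖u‖ ≤ |t| * ‖v‖ + |s| * ‖w₀‖ := by
      calc ‖u‖ ≤ ‖t • v‖ + ‖s • w₀‖ := norm_add_le _ _
      _ = |t| * ‖v‖ + |s| * ‖w₀‖ := by
        rw [norm_smul, norm_smul, Real.norm_eq_abs, Real.norm_eq_abs]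
    rw [habs_t] at h1
    have h2 : |s| * ‖w₀‖ ≤ S * ‖w₀‖ := mul_le_mul_of_nonneg_right hsabs (norm_nonneg _)
    have h3 : S * ‖w₀‖ = τ * (M * ‖w₀‖) := by rw [hSdef]; ring
    have hexp : τ * C = τ * ‖v‖ + τ * (M * ‖w₀‖) + τ := by rw [hCdef]; ring
    linarith only [h1, h2, h3, hexp, hτ0]
  have huτC : τ * C = C * τ := by ring
  have hwmem : w ∈ {w : H | w ≠ 0 ∧ fderiv ℝ J w w = 0} := by
    constructor
    · intro h0
      have he : w₀ = -u := eq_neg_of_add_eq_zero_left h0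
      have hcontra : ‖w₀‖ ≤ τ * C := by rw [he, norm_neg]; exact hunorm
      rw [huτC] at hcontra
      linarith only [hcontra, hτw]
    · exact hgs
  have hwball : w ∈ Metric.ball w₀ ε := by
    rw [Metric.mem_ball, dist_eq_norm]
    have he : w - w₀ = u := by rw [hwdef]; abel
    rw [he]
    calc ‖u‖ ≤ τ * C := hunorm
    _ < ε := by rw [huτC]; exact hτε
  have hJw : 0 ≤ σ * (J w - J w₀) := hεball ⟨hwball, hwmem⟩
  -- J estimate at u
  have hJub : |J w - J w₀ - t * b| ≤ τ * |b| / 2 := by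
    have h1 : ‖u‖ < δJ := lt_of_le_of_lt hunorm (by rw [huτC]; exact hτJ)
    have h2 := hJest u h1
    have h3 : fderiv ℝ J w₀ u = t * b := by
      rw [hudef, map_add, map_smul, map_smul, hN, smul_zero, add_zero, smul_eq_mul, ← hbdef]
    rw [h3] at h2
    have h4 : κ * ‖u‖ ≤ κ * (τ * C) := mul_le_mul_of_nonneg_left hunorm hκ0.le
    have h5 : κ * (τ * C) = τ * |b| / 2 := by
      rw [hκdef]; field_simp
    calc |J w - J w₀ - t * b| ≤ κ * ‖u‖ := h2
    _ ≤ κ * (τ * C) := h4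
    _ = τ * |b| / 2 := h5
  -- final contradiction
  have hfin : σ * (J w - J w₀ - t * b) ≤ τ * |b| / 2 := by
    calc σ * (J w - J w₀ - t * b) ≤ |σ * (J w - J w₀ - t * b)| := le_abs_self _
    _ = |J w - J w₀ - t * b| := by rw [abs_mul, hσabs, one_mul]
    _ ≤ τ * |b| / 2 := hJub
  have hsum : σ * (J w - J w₀) = σ * (t * b) + σ * (J w - J w₀ - t * b) := by ring
  rw [hsum, hσtb] at hJw
  have hbτ : 0 < |b| * τ := mul_pos hbabs hτ0
  linarith only [hJw, hfin, hbτ]
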